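/- If f is an o-polynomial over GF(2^m), then the map x ↦ x·f(x^{2^m-2}) is also an o-polynomial over GF(2^m). -/

import Mathlib

/-- `f` is an o-polynomial over the finite field `F` of characteristic 2. -/
def IsOPoly {F : Type*} [Field F] [Fintype F] (f : F → F) : Prop :=
  Function.Bijective f ∧ f 0 = 0 ∧
    ∀ s : F, Function.Bijective fun x : F =>
      (f (x + s) + f s) * x ^ (Fintype.card F - 2)

/-! For `q > 2` we have `x ^ (q - 2) = x⁻¹`, so the new map is `g x = x * f x⁻¹`. Its slope
function at `0` is `f ∘ inv`, and `g` itself is the slope function of `f` at `0` composed with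
inversion. For `s ≠ 0` the slope function of `g` at `s` is an affine bijection applied to the
slope function of `f` at `s⁻¹`, precomposed with the Möbius bijection `x ↦ (s + s² x⁻¹)⁻¹`.
For `q = 2` the new map is `f` itself. -/

open Function

theorem FiniteField.pow_card_sub_two_eq_inv {K : Type*} [Field K] [Fintype K]
    (hK : 2 < Fintype.card K) (x : K) : x ^ (Fintype.card K - 2) = x⁻¹ := by
  rcases eq_or_ne x 0 with rfl | hx
  · rw [zero_pow (by omega), inv_zero]
  · refine eq_inv_of_mul_eq_one_left ?_
    rw [← pow_succ, show Fintype.card K - 2 + 1 = Fintype.card K - 1 by omega,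
      FiniteField.pow_card_sub_one_eq_one x hx]

theorem FiniteField.charP_two_of_card_eq_two_pow {K : Type*} [Field K] [Fintype K] {m : ℕ}
    (hm : m ≠ 0) (hcard : Fintype.card K = 2 ^ m) : CharP K 2 := by
  have h : ((2 ^ m : ℕ) : K) = 0 := hcard ▸ FiniteField.cast_card_eq_zero K
  push_cast at h
  exact CharTwo.of_one_ne_zero_of_two_eq_zero one_ne_zero (pow_eq_zero_iff hm |>.mp h)

theorem eq_mul_apply_one_of_card_eq_two {K : Type*} [Field K] [Fintype K]
    (hK : Fintype.card K = 2) {f : K → K} (hf0 : f 0 = 0) : f = fun x => x * f 1 := by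
  funext x
  rcases eq_or_ne x 0 with rfl | hx
  · rw [hf0, zero_mul]
  · have hx1 : x = 1 := by simpa [hK] using FiniteField.pow_card_sub_one_eq_one x hx
    rw [hx1, one_mul]

def IsOPolyInv {F : Type*} [Field F] (f : F → F) : Prop :=
  Bijective f ∧ f 0 = 0 ∧ ∀ s : F, Bijective fun x : F => (f (x + s) + f s) * x⁻¹

theorem isOPoly_iff_isOPolyInv {F : Type*} [Field F] [Fintype F] (hF : 2 < Fintype.card F)
    (f : F → F) : IsOPoly f ↔ IsOPolyInv f := by
  simp only [IsOPoly, IsOPolyInv, FiniteField.pow_card_sub_two_eq_inv hF]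

theorem bijective_inv_add_mul_inv {F : Type*} [Field F] {s : F} (hs : s ≠ 0) :
    Bijective fun x : F => (s + s ^ 2 * x⁻¹)⁻¹ :=
  inv_involutive.bijective.comp <| (AddGroup.addLeft_bijective s).comp <|
    (mulLeft_bijective₀ _ (pow_ne_zero 2 hs)).comp inv_involutive.bijective

namespace IsOPolyInv

variable {F : Type*} [Field F] {f : F → F}

theorem bijective_mul_apply_inv (hf : IsOPolyInv f) : Bijective fun x => x * f x⁻¹ := by
  convert (hf.2.2 0).comp inv_involutive.bijective using 1
  funext x
  simp [hf.2.1, mul_comm]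

/-- Thanks to `0⁻¹ = 0` this holds for every `x`, including `x = 0` and `x = s`. -/
theorem slope_mul_apply_inv_eq [CharP F 2] (hf0 : f 0 = 0) {s : F} (hs : s ≠ 0) (x : F) :
    ((x + s) * f (x + s)⁻¹ + s * f s⁻¹) * x⁻¹ =
      (f ((s + s ^ 2 * x⁻¹)⁻¹ + s⁻¹) + f s⁻¹) * (s + s ^ 2 * x⁻¹)⁻¹⁻¹ * s⁻¹ + f s⁻¹ := by
  rcases eq_or_ne x 0 with rfl | hx
  · simp [CharTwo.add_self_eq_zero, hf0, hs]
  rcases eq_or_ne x s with rfl | hxs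
  · simp only [CharTwo.add_self_eq_zero, inv_zero, hf0, zero_mul, zero_add, sq,
      mul_inv_cancel_right₀ hs]
    field_simp
  have hxs' : x + s ≠ 0 := fun h => hxs (CharTwo.add_eq_zero.mp h)
  have hmobius : (s + s ^ 2 * x⁻¹)⁻¹ + s⁻¹ = (x + s)⁻¹ := by
    field_simp
    linear_combination x * CharTwo.two_eq_zero (R := F)
  rw [hmobius]
  generalize f (x + s)⁻¹ = a
  generalize f s⁻¹ = b
  field_simp
  linear_combination (-x * b) * CharTwo.two_eq_zero (R := F)

theorem mul_apply_inv [CharP F 2] (hf : IsOPolyInv f) : IsOPolyInv fun x => x * f x⁻¹ := by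
  obtain ⟨hfb, hf0, hslope⟩ := hf
  refine ⟨bijective_mul_apply_inv ⟨hfb, hf0, hslope⟩, by simp, fun s => ?_⟩
  rcases eq_or_ne s 0 with rfl | hs
  · convert hfb.comp inv_involutive.bijective using 1
    funext x
    rcases eq_or_ne x 0 with rfl | hx
    · simp [hf0]
    · field_simp
      simp
  · convert ((mulRight_bijective₀ _ (inv_ne_zero hs)).comp (hslope s⁻¹)).comp
      (bijective_inv_add_mul_inv hs) |> (AddGroup.addRight_bijective (f s⁻¹)).comp using 1
    funext x
    exact slope_mul_apply_inv_eq hf0 hs x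

end IsOPolyInv

/-- if f is an o-polynomial over GF(2^m) then x ↦ x·f(x^{2^m-2}) is too. -/
theorem stmt_5 {F : Type*} [Field F] [Fintype F]
    (m : ℕ) (hcard : Fintype.card F = 2 ^ m)
    (f : F → F) (hf : IsOPoly f) :
    IsOPoly fun x : F => x * f (x ^ (2 ^ m - 2)) := by
  have hm : m ≠ 0 := by
    rintro rfl
    have := Fintype.one_lt_card (α := F)
    omega
  obtain rfl | hm1 := eq_or_ne m 1
  · have hF : Fintype.card F = 2 := hcard
    convert hf using 1
    rw [eq_mul_apply_one_of_card_eq_two hF hf.2.1]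
    simp
  have hF : 2 < Fintype.card F := by
    rw [hcard]
    calc 2 < 2 ^ 2 := by norm_num
      _ ≤ 2 ^ m := Nat.pow_le_pow_right two_pos (by omega)
  have := FiniteField.charP_two_of_card_eq_two_pow hm hcard
  simp only [← hcard, FiniteField.pow_card_sub_two_eq_inv hF]
  rw [isOPoly_iff_isOPolyInv hF] at hf ⊢
  exact hf.mul_apply_inv
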